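/- arXiv:2601.02087 — 3 statements merged into one kernel-verified Lean document; each statement's English description precedes it below -/
import Mathlib

section
/- For any edge {u,v} of a simple graph G, the two triple local complementations agree: ((G * u) * v) * u = ((G * v) * u) * v. -/
/-- Local complementation of a simple graph `G` at a vertex `u`: toggles all
edges between pairs of distinct neighbors of `u`, leaving all other edges unchanged. -/
def localComp {V : Type*} (G : SimpleGraph V) (u : V) : SimpleGraph V where
  Adj v w := v ≠ w ∧ Xor' (G.Adj v w) (G.Adj u v ∧ G.Adj u w)
  symm := by
    constructor
    rintro v w ⟨h1, h2⟩
    refine ⟨h1.symm, ?_⟩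
    rwa [G.adj_comm w v, and_comm]
  loopless := by constructor; rintro v ⟨h, _⟩; exact h rfl

/-! Pivoting along `uv` exchanges the neighbourhoods of `u` and `v` and toggles every edge `xy`
with `x, y ∉ {u, v}` for which exactly one of `u ~ x, v ~ y` and `v ~ x, u ~ y` holds. Both the
exchange and this toggling rule are symmetric in `u` and `v`. -/

open Equiv

section

variable {V : Type*} {G : SimpleGraph V} {u v x y : V}

def pivot (G : SimpleGraph V) (u v : V) : SimpleGraph V :=
  localComp (localComp (localComp G u) v) u

theorem localComp_adj :
    (localComp G u).Adj x y ↔ x ≠ y ∧ Xor (G.Adj x y) (G.Adj u x ∧ G.Adj u y) :=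
  Iff.rfl

theorem localComp_adj_center : (localComp G u).Adj u x ↔ G.Adj u x := by
  rw [localComp_adj, xor_comm]
  simp only [G.irrefl, false_and, xor_false, id_eq]
  exact and_iff_right_of_imp SimpleGraph.Adj.ne

theorem localComp_adj_neighbor (huv : G.Adj u v) (hxv : x ≠ v) :
    (localComp G u).Adj v x ↔ Xor (G.Adj v x) (G.Adj u x) := by
  simp only [localComp_adj, huv, true_and, ne_eq, hxv.symm, not_false_eq_true]

theorem localComp_localComp_adj_center (huv : G.Adj u v) (hxu : x ≠ u) (hxv : x ≠ v) :
    (localComp (localComp G u) v).Adj u x ↔ G.Adj v x := by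
  have hvu : (localComp G u).Adj v u := (localComp_adj_center.mpr huv).symm
  rw [localComp_adj_neighbor hvu hxu, localComp_adj_center, localComp_adj_neighbor huv hxv]
  grind

theorem pivot_adj_left_right (huv : G.Adj u v) : (pivot G u v).Adj u v := by
  rw [pivot, localComp_adj_center, ← SimpleGraph.adj_comm, localComp_adj_center,
    SimpleGraph.adj_comm, localComp_adj_center]
  exact huv

theorem pivot_adj_left (huv : G.Adj u v) (hxu : x ≠ u) (hxv : x ≠ v) :
    (pivot G u v).Adj u x ↔ G.Adj v x := by
  rw [pivot, localComp_adj_center, localComp_localComp_adj_center huv hxu hxv]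

theorem pivot_adj_right (huv : G.Adj u v) (hxu : x ≠ u) (hxv : x ≠ v) :
    (pivot G u v).Adj v x ↔ G.Adj u x := by
  have huv₂ : (localComp (localComp G u) v).Adj u v := by
    rw [SimpleGraph.adj_comm, localComp_adj_center, SimpleGraph.adj_comm,
      localComp_adj_center]
    exact huv
  rw [pivot, localComp_adj_neighbor huv₂ hxv, localComp_adj_center,
    localComp_localComp_adj_center huv hxu hxv, localComp_adj_neighbor huv hxv]
  grind

theorem pivot_adj_of_ne (huv : G.Adj u v) (hx : x ≠ u ∧ x ≠ v) (hy : y ≠ u ∧ y ≠ v) :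
    (pivot G u v).Adj x y ↔
      x ≠ y ∧ Xor (G.Adj x y) (Xor (G.Adj u x ∧ G.Adj v y) (G.Adj v x ∧ G.Adj u y)) := by
  rw [pivot, localComp_adj, localComp_adj, localComp_adj,
    localComp_localComp_adj_center huv hx.1 hx.2,
    localComp_localComp_adj_center huv hy.1 hy.2,
    localComp_adj_neighbor huv hx.2, localComp_adj_neighbor huv hy.2]
  grind

theorem pivot_adj_swap [DecidableEq V] (huv : G.Adj u v) (hx : x = u ∨ x = v) :
    (pivot G u v).Adj x y ↔ G.Adj (swap u v x) (swap u v y) := by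
  obtain rfl | rfl | ⟨hyu, hyv⟩ : y = u ∨ y = v ∨ (y ≠ u ∧ y ≠ v) := by tauto
  · obtain rfl | rfl := hx
    · simp only [SimpleGraph.irrefl]
    · rw [swap_apply_left, swap_apply_right]
      exact iff_of_true (pivot_adj_left_right huv).symm huv
  · obtain rfl | rfl := hx
    · rw [swap_apply_left, swap_apply_right]
      exact iff_of_true (pivot_adj_left_right huv) huv.symm
    · simp only [SimpleGraph.irrefl]
  · rw [swap_apply_of_ne_of_ne hyu hyv]
    obtain rfl | rfl := hx
    · rw [swap_apply_left, pivot_adj_left huv hyu hyv]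
    · rw [swap_apply_right, pivot_adj_right huv hyu hyv]

end

/-- For any edge `{u,v}` of `G`, the two triple local complementations agree:
`((G * u) * v) * u = ((G * v) * u) * v`. -/
theorem pivot_well_defined {V : Type*} (G : SimpleGraph V) (u v : V) (huv : G.Adj u v) :
    localComp (localComp (localComp G u) v) u = localComp (localComp (localComp G v) u) v := by
  classical
  change pivot G u v = pivot G v u
  ext x y
  by_cases hx : x = u ∨ x = v
  · rw [pivot_adj_swap huv hx, pivot_adj_swap huv.symm hx.symm, swap_comm]
  by_cases hy : y = u ∨ y = v
  · rw [SimpleGraph.adj_comm, pivot_adj_swap huv hy, SimpleGraph.adj_comm (pivot G v u),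
      pivot_adj_swap huv.symm hy.symm, swap_comm, SimpleGraph.adj_comm]
  rw [pivot_adj_of_ne huv (not_or.mp hx) (not_or.mp hy),
    pivot_adj_of_ne huv.symm (not_or.mp hx).symm (not_or.mp hy).symm, xor_comm (_ ∧ _)]
end

section
/- The solution of the mean-first-passage-time matrix equation is unique: if M and M' both satisfy X = E + X·P − D·P and both have diagonal entries X_{ii} = 1/π_i, and the only left eigenvectors of P with eigenvalue 1 are scalar multiples of the all-ones vector, then M = M'. -/
/-!
Both solutions satisfy the same affine equation `X = E + X P - D P`, so their difference `Z`
satisfies `Z P = Z`: every row of `Z` is a left eigenvector of `P` for the eigenvalue `1`, hence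
constant. Since the diagonals agree, each row vanishes at its diagonal entry, so `Z = 0`.
-/

theorem sub_mul_eq_sub_of_eq_add_mul_sub {R : Type*} [Ring R] {a b p x y : R}
    (hx : x = a + x * p - b) (hy : y = a + y * p - b) : (x - y) * p = x - y := by
  rw [sub_mul]
  conv_rhs => rw [hx, hy]
  abel

theorem Matrix.eq_zero_of_mul_eq_self_of_diag_eq_zero {n R : Type*} [Fintype n] [Semiring R]
    {P Z : Matrix n n R} (hP : ∀ w : n → R, Matrix.vecMul w P = w → ∃ c : R, w = fun _ => c)
    (hZ : Z * P = Z) (hZd : ∀ i, Z i i = 0) : Z = 0 := by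
  ext i j
  obtain ⟨c, hc⟩ := hP (Z i) (by rw [← Matrix.mul_apply_eq_vecMul, hZ])
  have hc0 : c = 0 := (congrFun hc i).symm.trans (hZd i)
  rw [congrFun hc j, hc0, Matrix.zero_apply]

theorem mfpt_unique_general {N : ℕ} (P : Matrix (Fin N) (Fin N) ℝ)
    (pv : Fin N → ℝ)
    (heig : ∀ w : Fin N → ℝ, Matrix.vecMul w P = w → ∃ c : ℝ, w = fun _ => c)
    (M M' : Matrix (Fin N) (Fin N) ℝ)
    (hM : M = (Matrix.of fun _ _ => (1 : ℝ)) + M * P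
            - (Matrix.diagonal fun i => (pv i)⁻¹) * P)
    (hM' : M' = (Matrix.of fun _ _ => (1 : ℝ)) + M' * P
            - (Matrix.diagonal fun i => (pv i)⁻¹) * P)
    (hMd : ∀ i, M i i = (pv i)⁻¹) (hM'd : ∀ i, M' i i = (pv i)⁻¹) :
    M = M' :=
  sub_eq_zero.mp <| Matrix.eq_zero_of_mul_eq_self_of_diag_eq_zero heig
    (sub_mul_eq_sub_of_eq_add_mul_sub hM hM')
    fun i => by rw [Matrix.sub_apply, hMd, hM'd, sub_self]

/-- Uniqueness of the mean-first-passage-time matrix: if `M` and `M'` both satisfy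
`X = E + X·P - D·P` and both have diagonal entries `X_{ii} = 1/pv i`, and the only left
eigenvectors of `P` with eigenvalue `1` are scalar multiples of the all-ones vector,
then `M = M'`. -/
theorem mfpt_unique {N : ℕ} (P : Matrix (Fin N) (Fin N) ℝ)
    (hpos : ∀ i j, 0 ≤ P i j) (hcol : ∀ j, ∑ i, P i j = 1)
    (pv : Fin N → ℝ) (hstat : P.mulVec pv = pv) (hsum : ∑ j, pv j = 1)
    (hppos : ∀ i, 0 < pv i)
    (heig : ∀ w : Fin N → ℝ, Matrix.vecMul w P = w → ∃ c : ℝ, w = fun _ => c)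
    (M M' : Matrix (Fin N) (Fin N) ℝ)
    (hM : M = (Matrix.of fun _ _ => (1 : ℝ)) + M * P
            - (Matrix.diagonal fun i => (pv i)⁻¹) * P)
    (hM' : M' = (Matrix.of fun _ _ => (1 : ℝ)) + M' * P
            - (Matrix.diagonal fun i => (pv i)⁻¹) * P)
    (hMd : ∀ i, M i i = (pv i)⁻¹) (hM'd : ∀ i, M' i i = (pv i)⁻¹) :
    M = M' :=
  mfpt_unique_general P pv heig M M' hM hM' hMd hM'd
end

section
/- Let P be an N×N column-stochastic matrix with stationary vector π having positive entries, Π the matrix of repeated columns of π, and suppose Z = (I − P + Π)⁻¹ exists. Define D diagonal with D_{ii} = 1/π_i, Z₀ the diagonal part of Z, and E the all-ones matrix. Then M = D·(I − Z + Z₀·E) satisfies M = E + M·P − D·P and M_{ii} = 1/π_i. -/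
/-!
With `Π` the matrix whose columns all equal `π`, stationarity and `∑ π = 1` give `PΠ = ΠΠ = Π`,
hence `(I - P + Π)Π = Π` and so `ZΠ = Π`. Multiplying `Z(I - P + Π) = I` out then gives
`ZP = Z + Π - I`, and together with `EP = E` and `DΠ = E` this turns `MP` into `M + DP - E`.
The diagonal of `I - Z + Z₀E` is `1`, so `M i i = 1/π i`.
-/

section Ring

variable {α : Type*} [Ring α]

theorem mul_eq_add_sub_one_of_mul_one_sub_add_eq_one {P Q Z : α} (hPQ : P * Q = Q)
    (hQQ : Q * Q = Q) (hZ : Z * (1 - P + Q) = 1) : Z * P = Z + Q - 1 := by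
  have hQ : (1 - P + Q) * Q = Q := by rw [add_mul, sub_mul, one_mul, hPQ, hQQ, sub_self, zero_add]
  have hZQ : Z * Q = Q :=
    calc Z * Q = Z * ((1 - P + Q) * Q) := by rw [hQ]
      _ = Q := by rw [← mul_assoc, hZ, one_mul]
  rw [mul_add, mul_sub, mul_one, hZQ] at hZ
  rw [← hZ]
  abel

theorem mul_one_sub_add_mul_eq_add_mul_mul_sub {P Q Z D E W : α} (hZP : Z * P = Z + Q - 1)
    (hEP : E * P = E) (hDQ : D * Q = E) :
    D * (1 - Z + W * E) = E + D * (1 - Z + W * E) * P - D * P := by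
  rw [mul_assoc D, add_mul, sub_mul, one_mul, hZP, mul_assoc W, hEP, ← hDQ]
  noncomm_ring

end Ring

namespace Matrix

variable {m n ι R : Type*} [Fintype n]

theorem mul_replicateCol_of_mulVec_eq [NonUnitalNonAssocSemiring R] {P : Matrix n n R}
    {v : n → R} (h : P *ᵥ v = v) : P * replicateCol ι v = replicateCol ι v := by
  rw [← replicateCol_mulVec, h]

theorem replicateCol_mul_replicateCol_of_sum_eq_one [NonAssocSemiring R] {v : n → R}
    (h : ∑ j, v j = 1) : replicateCol n v * replicateCol n v = replicateCol n v := by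
  ext i j
  simp [mul_apply, ← Finset.mul_sum, h]

theorem ones_mul_of_sum_col_eq_one [NonAssocSemiring R] {P : Matrix n n R}
    (h : ∀ j, ∑ i, P i j = 1) : (of fun _ _ => 1 : Matrix m n R) * P = of fun _ _ => 1 := by
  ext i j
  simp [mul_apply, h]

theorem diagonal_inv_mul_replicateCol [DecidableEq n] [DivisionSemiring R]
    {v : n → R} (hv : ∀ i, v i ≠ 0) :
    diagonal (fun i => (v i)⁻¹) * replicateCol ι v = of fun _ _ => 1 := by
  ext i j
  simp [diagonal_mul, hv i]

theorem one_sub_add_diagonal_mul_ones_apply_self [DecidableEq n] [Ring R] (Z : Matrix n n R)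
    (i : n) : (1 - Z + diagonal (fun j => Z j j) * of (fun _ _ => 1) : Matrix n n R) i i = 1 := by
  simp [diagonal_mul]

end Matrix

open Matrix in
theorem mfpt_solution_general {N : ℕ} (P : Matrix (Fin N) (Fin N) ℝ)
    (hcol : ∀ j, ∑ i, P i j = 1)
    (pv : Fin N → ℝ) (hstat : P.mulVec pv = pv) (hsum : ∑ j, pv j = 1)
    (hppos : ∀ i, 0 < pv i)
    (hZ : IsUnit (1 - P + Matrix.of fun i _ => pv i)) :
    let E : Matrix (Fin N) (Fin N) ℝ := Matrix.of fun _ _ => 1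
    let D : Matrix (Fin N) (Fin N) ℝ := Matrix.diagonal fun i => (pv i)⁻¹
    let Z : Matrix (Fin N) (Fin N) ℝ := (1 - P + Matrix.of fun i _ => pv i)⁻¹
    let Z0 : Matrix (Fin N) (Fin N) ℝ := Matrix.diagonal fun i => Z i i
    let M : Matrix (Fin N) (Fin N) ℝ := D * (1 - Z + Z0 * E)
    M = E + M * P - D * P ∧ ∀ i, M i i = (pv i)⁻¹ := by
  intro E D Z Z0 M
  have hZinv : Z * (1 - P + replicateCol (Fin N) pv) = 1 :=
    nonsing_inv_mul _ ((isUnit_iff_isUnit_det _).mp hZ)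
  have hZP : Z * P = Z + replicateCol (Fin N) pv - 1 :=
    mul_eq_add_sub_one_of_mul_one_sub_add_eq_one (mul_replicateCol_of_mulVec_eq hstat)
      (replicateCol_mul_replicateCol_of_sum_eq_one hsum) hZinv
  refine ⟨mul_one_sub_add_mul_eq_add_mul_mul_sub hZP (ones_mul_of_sum_col_eq_one hcol)
    (diagonal_inv_mul_replicateCol fun i => (hppos i).ne'), fun i => ?_⟩
  calc M i i = (pv i)⁻¹ * (1 - Z + Z0 * E) i i := diagonal_mul _ _ _ _
    _ = (pv i)⁻¹ := by rw [one_sub_add_diagonal_mul_ones_apply_self, mul_one]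

/-- The explicit solution of the mean-first-passage-time equation: with `P`
column-stochastic, stationary vector `pv` positive, `Π` the matrix of repeated columns
of `pv`, `Z = (I - P + Π)⁻¹` (assumed to exist), `D` diagonal with `D_{ii} = 1/pv i`,
`Z₀` the diagonal part of `Z`, and `E` the all-ones matrix, the matrix
`M = D·(I - Z + Z₀·E)` satisfies `M = E + M·P - D·P` and `M_{ii} = 1/pv i`. -/
theorem mfpt_solution {N : ℕ} (P : Matrix (Fin N) (Fin N) ℝ)
    (hpos : ∀ i j, 0 ≤ P i j) (hcol : ∀ j, ∑ i, P i j = 1)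
    (pv : Fin N → ℝ) (hstat : P.mulVec pv = pv) (hsum : ∑ j, pv j = 1)
    (hppos : ∀ i, 0 < pv i)
    (hZ : IsUnit (1 - P + Matrix.of fun i _ => pv i)) :
    let E : Matrix (Fin N) (Fin N) ℝ := Matrix.of fun _ _ => 1
    let D : Matrix (Fin N) (Fin N) ℝ := Matrix.diagonal fun i => (pv i)⁻¹
    let Z : Matrix (Fin N) (Fin N) ℝ := (1 - P + Matrix.of fun i _ => pv i)⁻¹
    let Z0 : Matrix (Fin N) (Fin N) ℝ := Matrix.diagonal fun i => Z i i
    let M : Matrix (Fin N) (Fin N) ℝ := D * (1 - Z + Z0 * E)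
    M = E + M * P - D * P ∧ ∀ i, M i i = (pv i)⁻¹ :=
  mfpt_solution_general P hcol pv hstat hsum hppos hZ
end
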